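/- Define h : {(x,y) : 0 ≤ x ≤ y ≤ 1} → ℝ by h(x,y) = (1/2)·max(x+y−2/3, 0) + (2/3)·max(x+y−1, 0) + x/3 + 2/3. Then for all 0 ≤ θ₁ ≤ θ₂ ≤ θ₃ ≤ 1, writing s = max(θ₁+θ₂+θ₃, 1), we have 2s ≤ h(θ₁,θ₂) + h(θ₁,θ₃) + h(θ₂,θ₃) ≤ (7/3)·s. -/

import Mathlib

noncomputable def hA (x y : ℝ) : ℝ :=
  1 / 2 * max (x + y - 2 / 3) 0 + 2 / 3 * max (x + y - 1) 0 + x / 3 + 2 / 3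

/-! Write `hA x y = kink (x + y) + x / 3 + 2 / 3`, where `kink z = max 0 ((z - 2/3) / 2) (7z/6 - 1)`
is convex. The lower bound is a single linear combination of the three lines below `kink`. The
upper bound bounds a convex function from above, so it uses the exact value of `kink` at each pair
sum; on each of the resulting regions the sum is affine, and a linear combination of the
constraints with `t ≤ max t 1` and `1 ≤ max t 1` (for `t = a + b + c`) bounds it, without splitting
on `t ≤ 1`. -/

noncomputable def kink (z : ℝ) : ℝ :=
  1 / 2 * max (z - 2 / 3) 0 + 2 / 3 * max (z - 1) 0

theorem hA_eq_kink (x y : ℝ) : hA x y = kink (x + y) + x / 3 + 2 / 3 := rfl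

theorem kink_nonneg (z : ℝ) : 0 ≤ kink z := by
  unfold kink; positivity

theorem half_sub_le_kink (z : ℝ) : (z - 2 / 3) / 2 ≤ kink z := by
  have := le_max_left (z - 2 / 3) 0
  have := le_max_right (z - 1) 0
  unfold kink; linarith

theorem seven_sixths_sub_le_kink (z : ℝ) : 7 / 6 * z - 1 ≤ kink z := by
  have := le_max_left (z - 2 / 3) 0
  have := le_max_left (z - 1) 0
  unfold kink; linarith

theorem kink_cases (z : ℝ) :
    (z ≤ 2 / 3 ∧ kink z = 0) ∨
    (2 / 3 ≤ z ∧ z ≤ 1 ∧ kink z = (z - 2 / 3) / 2) ∨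
    (1 ≤ z ∧ kink z = 7 / 6 * z - 1) := by
  unfold kink
  rcases le_total z (2 / 3) with h | h
  · left
    refine ⟨h, ?_⟩
    rw [max_eq_right (by linarith), max_eq_right (by linarith)]; ring
  rcases le_total z 1 with h' | h'
  · right; left
    refine ⟨h, h', ?_⟩
    rw [max_eq_left (by linarith), max_eq_right (by linarith)]; ring
  · right; right
    refine ⟨h', ?_⟩
    rw [max_eq_left (by linarith), max_eq_left (by linarith)]; ring

section

variable {a b c : ℝ}

theorem two_mul_max_le_sum_hA (ha : 0 ≤ a) (hab : a ≤ b) :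
    2 * max (a + b + c) 1 ≤ hA a b + hA a c + hA b c := by
  simp only [hA_eq_kink]
  have := kink_nonneg (a + b)
  have := kink_nonneg (a + c)
  have := kink_nonneg (b + c)
  have := half_sub_le_kink (a + b)
  have := half_sub_le_kink (a + c)
  have := seven_sixths_sub_le_kink (a + c)
  have := seven_sixths_sub_le_kink (b + c)
  rw [mul_max_of_nonneg _ _ zero_le_two, max_le_iff]
  constructor <;> linarith

theorem sum_hA_le_seven_thirds_mul_max (ha : 0 ≤ a) (hab : a ≤ b) (hbc : b ≤ c) (hc : c ≤ 1) :
    hA a b + hA a c + hA b c ≤ 7 / 3 * max (a + b + c) 1 := by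
  simp only [hA_eq_kink]
  have := le_max_left (a + b + c) 1
  have := le_max_right (a + b + c) 1
  rcases kink_cases (a + b) with ⟨_, h₁⟩ | ⟨_, _, h₁⟩ | ⟨_, h₁⟩ <;>
  rcases kink_cases (a + c) with ⟨_, h₂⟩ | ⟨_, _, h₂⟩ | ⟨_, h₂⟩ <;>
  rcases kink_cases (b + c) with ⟨_, h₃⟩ | ⟨_, _, h₃⟩ | ⟨_, h₃⟩ <;>
  · rw [h₁, h₂, h₃]; linarith

end

theorem stmt_6 : ∀ θ₁ θ₂ θ₃ : ℝ, 0 ≤ θ₁ → θ₁ ≤ θ₂ → θ₂ ≤ θ₃ → θ₃ ≤ 1 →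
    2 * max (θ₁ + θ₂ + θ₃) 1 ≤ hA θ₁ θ₂ + hA θ₁ θ₃ + hA θ₂ θ₃ ∧
    hA θ₁ θ₂ + hA θ₁ θ₃ + hA θ₂ θ₃ ≤ 7 / 3 * max (θ₁ + θ₂ + θ₃) 1 :=
  fun _ _ _ h₀ h₁₂ h₂₃ h₃ =>
    ⟨two_mul_max_le_sum_hA h₀ h₁₂, sum_hA_le_seven_thirds_mul_max h₀ h₁₂ h₂₃ h₃⟩
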